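/- The dotted six-vertex weights are related to the undotted ones by a flip symmetry: for all i,j,k,l in {0,1}, ((x-qy)/(x-y)) * W_{y/x}(i,j;k,l) = (-1)^{i-k} * q^{1-j} * W_{x/(qy)}(k, 1-j; i, 1-l), where W denotes the six-vertex weights W_{y/x}(0,0;0,0)=1, W_{y/x}(1,0;1,0)=q(x-y)/(x-qy), W_{y/x}(1,0;0,1)=(1-q)x/(x-qy), W_{y/x}(0,1;1,0)=(1-q)y/(x-qy), W_{y/x}(0,1;0,1)=(x-y)/(x-qy), W_{y/x}(1,1;1,1)=1, zero otherwise. Here W_{x/(qy)}(a,b;c,d) means the same weight function with the spectral ratio y/x replaced by x/(qy), i.e. with x replaced by 1/x and y replaced by 1/(qy). -/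

import Mathlib

/-!
Substituting `x ↦ x⁻¹`, `y ↦ (q y)⁻¹` turns the denominator `x - q y` of the weights into
`(y - x) / (x y)` and `x - y` into `(q y - x) / (q x y)`, so the flipped weights become
rational functions with denominator `x - y`. Both sides of the flip relation vanish unless
`i + j = k + l`, a condition the flip `(i, j, k, l) ↦ (k, 1 - j, i, 1 - l)` preserves; the six
remaining cases are identities of rational functions.
-/

/-- The weights of the stochastic six-vertex model. -/
def W6 {F : Type*} [Field F] (q x y : F) (i j k l : Fin 2) : F :=
  if (i, j, k, l) = (0, 0, 0, 0) then 1
  else if (i, j, k, l) = (1, 0, 1, 0) then q * (x - y) / (x - q * y)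
  else if (i, j, k, l) = (1, 0, 0, 1) then (1 - q) * x / (x - q * y)
  else if (i, j, k, l) = (0, 1, 1, 0) then (1 - q) * y / (x - q * y)
  else if (i, j, k, l) = (0, 1, 0, 1) then (x - y) / (x - q * y)
  else if (i, j, k, l) = (1, 1, 1, 1) then 1
  else 0

namespace W6

variable {F : Type*} [Field F]

section

variable (q x y : F)

@[simp] lemma apply_zero_zero_zero_zero : W6 q x y 0 0 0 0 = 1 := rfl

@[simp] lemma apply_one_zero_one_zero : W6 q x y 1 0 1 0 = q * (x - y) / (x - q * y) := rfl

@[simp] lemma apply_one_zero_zero_one : W6 q x y 1 0 0 1 = (1 - q) * x / (x - q * y) := rfl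

@[simp] lemma apply_zero_one_one_zero : W6 q x y 0 1 1 0 = (1 - q) * y / (x - q * y) := rfl

@[simp] lemma apply_zero_one_zero_one : W6 q x y 0 1 0 1 = (x - y) / (x - q * y) := rfl

@[simp] lemma apply_one_one_one_one : W6 q x y 1 1 1 1 = 1 := rfl

end

variable {q x y : F}

lemma eq_zero_of_add_ne {i j k l : Fin 2} (h : (i : ℕ) + j ≠ k + l) : W6 q x y i j k l = 0 := by
  fin_cases i <;> fin_cases j <;> fin_cases k <;> fin_cases l <;> simp_all [W6]

lemma apply_inv_one_zero_one_zero (hx : x ≠ 0) (hy : y ≠ 0) (hq : q ≠ 0) (hxy : x - y ≠ 0) :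
    W6 q x⁻¹ (q * y)⁻¹ 1 0 1 0 = (x - q * y) / (x - y) := by
  rw [apply_one_zero_one_zero, mul_inv, mul_inv_cancel_left₀ hq, inv_sub_inv hx hy, ← neg_sub x y]
  field_simp
  ring

lemma apply_inv_one_zero_zero_one (hx : x ≠ 0) (hy : y ≠ 0) (hq : q ≠ 0) (hxy : x - y ≠ 0) :
    W6 q x⁻¹ (q * y)⁻¹ 1 0 0 1 = (q - 1) * y / (x - y) := by
  rw [apply_one_zero_zero_one, mul_inv, mul_inv_cancel_left₀ hq, inv_sub_inv hx hy, ← neg_sub x y]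
  field_simp
  ring

lemma apply_inv_zero_one_one_zero (hx : x ≠ 0) (hy : y ≠ 0) (hq : q ≠ 0) (hxy : x - y ≠ 0) :
    W6 q x⁻¹ (q * y)⁻¹ 0 1 1 0 = (q - 1) * x / (q * (x - y)) := by
  rw [apply_zero_one_one_zero, mul_inv, mul_inv_cancel_left₀ hq, inv_sub_inv hx hy, ← neg_sub x y]
  field_simp
  ring

lemma apply_inv_zero_one_zero_one (hx : x ≠ 0) (hy : y ≠ 0) (hq : q ≠ 0) (hxy : x - y ≠ 0) :
    W6 q x⁻¹ (q * y)⁻¹ 0 1 0 1 = (x - q * y) / (q * (x - y)) := by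
  rw [apply_zero_one_zero_one, mul_inv, mul_inv_cancel_left₀ hq, inv_sub_inv hx hy, ← neg_sub x y]
  field_simp
  ring

end W6

theorem sixVertex_flip_symmetry_general {F : Type*} [Field F] (q x y : F)
    (hx : x ≠ 0) (hy : y ≠ 0) (hq : q ≠ 0)
    (hxy : x - y ≠ 0) (hxqy : x - q * y ≠ 0)
    (i j k l : Fin 2) :
    ((x - q * y) / (x - y)) * W6 q x y i j k l =
      (-1 : F) ^ ((i : ℤ) - (k : ℤ)) * q ^ (1 - (j : ℕ)) *
        W6 q x⁻¹ (q * y)⁻¹ k (1 - j) i (1 - l) := by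
  fin_cases i <;> fin_cases j <;> fin_cases k <;> fin_cases l <;>
    simp only [Fin.zero_eta, Fin.mk_one, Fin.isValue, sub_zero, sub_self,
      W6.apply_inv_one_zero_one_zero hx hy hq hxy, W6.apply_inv_one_zero_zero_one hx hy hq hxy,
      W6.apply_inv_zero_one_one_zero hx hy hq hxy, W6.apply_inv_zero_one_zero_one hx hy hq hxy] <;>
    simp [W6.eq_zero_of_add_ne] <;>
    field_simp <;>
    ring

/-- Flip symmetry relating the dotted six-vertex weights to the undotted ones:
`((x-qy)/(x-y)) ⬝ W_{y/x}(i,j;k,l) = (-1)^{i-k} q^{1-j} W_{x/(qy)}(k,1-j;i,1-l)`,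
where the weight with modified spectral parameters is obtained by substituting
`x ↦ 1/x` and `y ↦ 1/(qy)`. -/
theorem sixVertex_flip_symmetry {F : Type*} [Field F] (q x y : F)
    (hx : x ≠ 0) (hy : y ≠ 0) (hq : q ≠ 0)
    (hxy : x - y ≠ 0) (hxqy : x - q * y ≠ 0)
    (hd : x⁻¹ - q * (q * y)⁻¹ ≠ 0) (hd' : x⁻¹ - (q * y)⁻¹ ≠ 0)
    (i j k l : Fin 2) :
    ((x - q * y) / (x - y)) * W6 q x y i j k l =
      (-1 : F) ^ ((i : ℤ) - (k : ℤ)) * q ^ (1 - (j : ℕ)) *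
        W6 q x⁻¹ (q * y)⁻¹ k (1 - j) i (1 - l) :=
  sixVertex_flip_symmetry_general q x y hx hy hq hxy hxqy i j k l
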